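/- Let (Γ, I) be an independence alphabet, η : M(Γ, I) → Q an embedding into the queue monoid, a ∈ Γ with π(η(a)) ≠ ε and π̄(η(a)) = ε (or symmetrically π(η(a)) = ε and π̄(η(a)) ≠ ε), and b, c ∈ Γ with (b, c) ∈ I. Then (a, b) ∈ I or (a, c) ∈ I. -/

import Mathlib

def qstep (A : Type) [DecidableEq A] : Option (List A) → A ⊕ A → Option (List A)
  | none, _ => none
  | some q, Sum.inl a => some (q ++ [a])
  | some q, Sum.inr a =>
      match q with
      | [] => none
      | b :: q' => if b = a then some q' else none

def qact (A : Type) [DecidableEq A] (q : Option (List A)) (u : List (A ⊕ A)) :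
    Option (List A) :=
  u.foldl (qstep A) q

def QEquiv (A : Type) [DecidableEq A] (u v : List (A ⊕ A)) : Prop :=
  ∀ q : Option (List A), qact A q u = qact A q v

/-- The congruence on the free monoid of queue actions identifying sequences with the
same effect on every queue state. -/
def queueCon (A : Type) [DecidableEq A] : Con (FreeMonoid (A ⊕ A)) where
  r u v := QEquiv A u.toList v.toList
  iseqv := ⟨fun _ _ => rfl, fun h q => (h q).symm, fun h1 h2 q => (h1 q).trans (h2 q)⟩
  mul' := by
    intro u v u' v' hu hv q
    have h1 := hu q
    have h2 := hv (qact A q v.toList)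
    show qact A q (u * u').toList = qact A q (v * v').toList
    rw [FreeMonoid.toList_mul, FreeMonoid.toList_mul]
    unfold qact at h1 h2 ⊢
    rw [List.foldl_append, List.foldl_append, h1, h2]

/-- The queue monoid over the alphabet `A`. -/
abbrev QueueMonoid (A : Type) [DecidableEq A] := (queueCon A).Quotient

/-- The congruence on the free monoid generated by `ab = ba` for independent `(a,b)`. -/
def traceCon {Γ : Type} (I : Γ → Γ → Prop) : Con (FreeMonoid Γ) :=
  conGen fun u v => ∃ a b : Γ, I a b ∧
    u = FreeMonoid.of a * FreeMonoid.of b ∧ v = FreeMonoid.of b * FreeMonoid.of a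

/-- The trace monoid of the independence alphabet `(Γ, I)`. -/
abbrev TraceMonoid {Γ : Type} (I : Γ → Γ → Prop) := (traceCon I).Quotient

/-- Positive projection: erase all read actions. -/
def ppr {A : Type} (u : List (A ⊕ A)) : List A :=
  u.filterMap (Sum.elim some fun _ => none)

/-- Negative projection: erase all write actions (mapping ā to a). -/
def npr {A : Type} (u : List (A ⊕ A)) : List A :=
  u.filterMap (Sum.elim (fun _ => none) some)

/-- `a ∈ Γ₊`: some (equivalently, every) representative of `η(a)` has nonempty positive
projection and empty negative projection. -/
def GammaPlus {Γ A : Type} [DecidableEq A] (I : Γ → Γ → Prop)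
    (η : TraceMonoid I →* QueueMonoid A) (a : Γ) : Prop :=
  ∃ w : List (A ⊕ A),
    (queueCon A).mk' (FreeMonoid.ofList w) = η ((traceCon I).mk' (FreeMonoid.of a)) ∧
    ppr w ≠ [] ∧ npr w = []

/-- `a ∈ Γ₋`: some representative of `η(a)` has empty positive projection and nonempty
negative projection. -/
def GammaMinus {Γ A : Type} [DecidableEq A] (I : Γ → Γ → Prop)
    (η : TraceMonoid I →* QueueMonoid A) (a : Γ) : Prop :=
  ∃ w : List (A ⊕ A),
    (queueCon A).mk' (FreeMonoid.ofList w) = η ((traceCon I).mk' (FreeMonoid.of a)) ∧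
    ppr w = [] ∧ npr w ≠ []

/-- `a ∈ Γ±`: some representative of `η(a)` has both projections nonempty. -/
def GammaPM {Γ A : Type} [DecidableEq A] (I : Γ → Γ → Prop)
    (η : TraceMonoid I →* QueueMonoid A) (a : Γ) : Prop :=
  ∃ w : List (A ⊕ A),
    (queueCon A).mk' (FreeMonoid.ofList w) = η ((traceCon I).mk' (FreeMonoid.of a)) ∧
    ppr w ≠ [] ∧ npr w ≠ []

/-!
Suppose `(a, b), (a, c) ∉ I`. The action of a queue word `u` on a queue `q` only depends on its
projections `π u`, `π̄ u` and on the least length `q` must have for `u` not to run dry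
(`qact_some`). If `η a` only writes, then in `η a ^ K * u` with `K` large every read of `u` is
served from the letters written by `η a ^ K`, so `η a ^ K * u = η a ^ K * v` as soon as `u` and
`v` have the same projections. Since `η b` and `η c` commute, so do their projections, which
forces `π (η b) ^ m = π (η c) ^ n` for some `m + n > 0`; this makes
`u = η b ^ m * η a * η c ^ n` and `v = η c ^ n * η a * η b ^ m` such a pair. The traces
`a ^ K b ^ m a c ^ n` and `a ^ K c ^ n a b ^ m` are nevertheless distinct, as their projections
onto the dependent pair `{a, b}` (or `{a, c}` when `m = 0`) show, contradicting injectivity of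
`η`. If `η a` only reads, the same argument runs with `η a ^ K` placed at the end.
-/

section Queue

variable {A : Type}

def requiredLength : List (A ⊕ A) → ℕ
  | [] => 0
  | .inl _ :: u => requiredLength u - 1
  | .inr _ :: u => requiredLength u + 1

@[simp] lemma ppr_cons_inl (x : A) (u : List (A ⊕ A)) : ppr (.inl x :: u) = x :: ppr u := rfl
@[simp] lemma ppr_cons_inr (x : A) (u : List (A ⊕ A)) : ppr (.inr x :: u) = ppr u := rfl
@[simp] lemma npr_cons_inl (x : A) (u : List (A ⊕ A)) : npr (.inl x :: u) = npr u := rfl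
@[simp] lemma npr_cons_inr (x : A) (u : List (A ⊕ A)) : npr (.inr x :: u) = x :: npr u := rfl

lemma requiredLength_le_length_npr (u : List (A ⊕ A)) : requiredLength u ≤ (npr u).length := by
  induction u with
  | nil => rfl
  | cons e u ih =>
    cases e <;> simp only [requiredLength, npr_cons_inl, npr_cons_inr, List.length_cons] <;> omega

lemma requiredLength_append_of_npr_eq_nil {p : List (A ⊕ A)} (hp : npr p = [])
    (u : List (A ⊕ A)) : requiredLength (p ++ u) = requiredLength u - p.length := by
  induction p with
  | nil => rfl
  | cons e p ih =>
    cases e with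
    | inl x =>
      simp only [npr_cons_inl] at hp
      simp only [List.cons_append, requiredLength, ih hp, List.length_cons]
      omega
    | inr x => simp at hp

lemma requiredLength_of_ppr_eq_nil {v : List (A ⊕ A)} (hv : ppr v = []) :
    requiredLength v = v.length := by
  induction v with
  | nil => rfl
  | cons e v ih =>
    cases e with
    | inl x => simp at hv
    | inr x =>
      simp only [ppr_cons_inr] at hv
      simp [requiredLength, ih hv]

lemma requiredLength_append_of_ppr_eq_nil {v : List (A ⊕ A)} (hv : ppr v = []) :
    ∀ u : List (A ⊕ A), (ppr u).length ≤ v.length →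
      requiredLength (u ++ v) = v.length + (npr u).length - (ppr u).length
  | [], _ => by simp [requiredLength_of_ppr_eq_nil hv, npr, ppr]
  | .inl x :: u, h => by
    simp only [ppr_cons_inl, List.length_cons] at h
    simp only [List.cons_append, requiredLength, npr_cons_inl, ppr_cons_inl, List.length_cons,
      requiredLength_append_of_ppr_eq_nil hv u (by omega)]
    omega
  | .inr x :: u, h => by
    simp only [ppr_cons_inr] at h
    simp only [List.cons_append, requiredLength, npr_cons_inr, ppr_cons_inr, List.length_cons,
      requiredLength_append_of_ppr_eq_nil hv u h]
    omega

variable [DecidableEq A]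

lemma qact_none (u : List (A ⊕ A)) : qact A none u = none := by
  induction u with
  | nil => rfl
  | cons e u ih => exact ih

lemma qact_cons (q : Option (List A)) (e : A ⊕ A) (u : List (A ⊕ A)) :
    qact A q (e :: u) = qact A (qstep A q e) u := rfl

theorem qact_some (u : List (A ⊕ A)) (q : List A) :
    qact A (some q) u =
      if requiredLength u ≤ q.length ∧ npr u <+: q ++ ppr u then
        some ((q ++ ppr u).drop (npr u).length)
      else none := by
  induction u generalizing q with
  | nil => simp [qact, requiredLength, npr, ppr]
  | cons e u ih =>
    cases e with
    | inl x =>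
      simp only [qact_cons, qstep, ih, requiredLength, ppr_cons_inl, npr_cons_inl,
        List.append_assoc, List.singleton_append, List.length_append, List.length_singleton,
        Nat.sub_le_iff_le_add]
    | inr x =>
      rcases q with _ | ⟨y, q⟩
      · simp [qact_cons, qstep, qact_none, requiredLength]
      · by_cases hyx : y = x
        · subst hyx
          simp [qact_cons, qstep, ih, requiredLength]
        · simp [qact_cons, qstep, qact_none, hyx, Ne.symm hyx]

end Queue

namespace FreeMonoid

variable {α : Type*}

lemma length_pow (x : FreeMonoid α) (n : ℕ) : (x ^ n).length = n * x.length := by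
  induction n with
  | zero => rw [pow_zero, length_one, zero_mul]
  | succ n ih => rw [pow_succ, length_mul, ih, Nat.succ_mul]

lemma eq_of_commute_of_length_eq {x y : FreeMonoid α} (h : Commute x y)
    (hl : x.length = y.length) : x = y :=
  (List.append_inj (congrArg toList h.eq) hl).1

lemma exists_pow_eq_pow_of_commute {s t : FreeMonoid α} (h : Commute s t) :
    ∃ m n : ℕ, 0 < m + n ∧ s ^ m = t ^ n := by
  by_cases hs : s = 1
  · exact ⟨1, 0, one_pos, by simp [hs]⟩
  · have hs : 0 < s.length := Nat.pos_of_ne_zero (mt length_eq_zero.1 hs)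
    exact ⟨t.length, s.length, Nat.add_pos_right _ hs,
      eq_of_commute_of_length_eq (h.pow_pow _ _) (by simp only [length_pow, mul_comm])⟩

lemma le_length_pow {x : FreeMonoid α} (hx : x ≠ 1) (n : ℕ) : n ≤ (x ^ n).length := by
  rw [length_pow]
  exact Nat.le_mul_of_pos_right n (Nat.pos_of_ne_zero (mt length_eq_zero.1 hx))

end FreeMonoid

section QueueMonoid

variable {A : Type}

def writes : FreeMonoid (A ⊕ A) →* FreeMonoid A where
  toFun u := .ofList (ppr u.toList)
  map_one' := rfl
  map_mul' _ _ := List.filterMap_append ..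

def reads : FreeMonoid (A ⊕ A) →* FreeMonoid A where
  toFun u := .ofList (npr u.toList)
  map_one' := rfl
  map_mul' _ _ := List.filterMap_append ..

variable [DecidableEq A]

lemma queueCon_mk'_eq_of_reads_writes {u v : FreeMonoid (A ⊕ A)} (hr : reads u = reads v)
    (hw : writes u = writes v) (hl : requiredLength u.toList = requiredLength v.toList) :
    (queueCon A).mk' u = (queueCon A).mk' v := by
  refine (queueCon A).eq.2 fun q => ?_
  rcases q with _ | q
  · rw [qact_none, qact_none]
  · have hr' : npr u.toList = npr v.toList := congrArg FreeMonoid.toList hr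
    have hw' : ppr u.toList = ppr v.toList := congrArg FreeMonoid.toList hw
    simp only [qact_some, hr', hw', hl]

lemma commute_reads_writes_of_commute {y z : FreeMonoid (A ⊕ A)}
    (h : Commute ((queueCon A).mk' y) ((queueCon A).mk' z)) :
    Commute (reads y) (reads z) ∧ Commute (writes y) (writes z) := by
  -- started on the queue `π̄ (y * z)`, the word `y * z` ends with `π (y * z)`; so must `z * y`
  set r := npr (y * z).toList
  have hrun := (queueCon A).eq.1 h.eq (some r)
  have hyz : qact A (some r) (y * z).toList = some (ppr (y * z).toList) := by
    rw [qact_some, if_pos ⟨requiredLength_le_length_npr _, List.prefix_append _ _⟩,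
      List.drop_left]
  rw [hyz, qact_some] at hrun
  split_ifs at hrun with hzy
  have hlen : (npr (z * y).toList).length = r.length := by
    simp [r, npr, List.filterMap_append, add_comm]
  have hnpr : npr (z * y).toList = r :=
    (List.prefix_of_prefix_length_le hzy.2 (List.prefix_append _ _) hlen.le).eq_of_length hlen
  rw [hnpr, List.drop_left, Option.some_inj] at hrun
  have hr : reads (y * z) = reads (z * y) := congrArg FreeMonoid.ofList hnpr.symm
  have hw : writes (y * z) = writes (z * y) := congrArg FreeMonoid.ofList hrun
  rw [map_mul, map_mul] at hr hw
  exact ⟨hr, hw⟩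

lemma queueCon_mk'_pow_mul_eq {x u v : FreeMonoid (A ⊕ A)} (hx : reads x = 1)
    (hx1 : writes x ≠ 1) (hr : reads u = reads v) (hw : writes u = writes v) {K : ℕ}
    (hK : (reads u).length ≤ K) :
    (queueCon A).mk' (x ^ K * u) = (queueCon A).mk' (x ^ K * v) := by
  refine queueCon_mk'_eq_of_reads_writes (by simp [hr]) (by simp [hw]) ?_
  have hxK : npr (x ^ K).toList = [] :=
    congrArg FreeMonoid.toList (by rw [map_pow, hx, one_pow] : reads (x ^ K) = 1)
  have hlen : K ≤ (x ^ K).toList.length :=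
    FreeMonoid.le_length_pow (by rintro rfl; exact hx1 (map_one _)) K
  have hr' : npr u.toList = npr v.toList := congrArg FreeMonoid.toList hr
  have hKu : (npr u.toList).length ≤ K := hK
  have hKv : (npr v.toList).length ≤ K := hr' ▸ hKu
  simp only [FreeMonoid.toList_mul, requiredLength_append_of_npr_eq_nil hxK]
  rw [Nat.sub_eq_zero_of_le (((requiredLength_le_length_npr _).trans hKu).trans hlen),
    Nat.sub_eq_zero_of_le (((requiredLength_le_length_npr _).trans hKv).trans hlen)]

lemma queueCon_mk'_mul_pow_eq {x u v : FreeMonoid (A ⊕ A)} (hx : writes x = 1)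
    (hx1 : reads x ≠ 1) (hr : reads u = reads v) (hw : writes u = writes v) {K : ℕ}
    (hK : (writes u).length ≤ K) :
    (queueCon A).mk' (u * x ^ K) = (queueCon A).mk' (v * x ^ K) := by
  refine queueCon_mk'_eq_of_reads_writes (by simp [hr]) (by simp [hw]) ?_
  have hxK : ppr (x ^ K).toList = [] :=
    congrArg FreeMonoid.toList (by rw [map_pow, hx, one_pow] : writes (x ^ K) = 1)
  have hlen : K ≤ (x ^ K).toList.length :=
    FreeMonoid.le_length_pow (by rintro rfl; exact hx1 (map_one _)) K
  have hr' : npr u.toList = npr v.toList := congrArg FreeMonoid.toList hr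
  have hw' : ppr u.toList = ppr v.toList := congrArg FreeMonoid.toList hw
  have hK' : (ppr u.toList).length ≤ K := hK
  simp only [FreeMonoid.toList_mul]
  rw [requiredLength_append_of_ppr_eq_nil hxK _ (by omega), hr', hw',
    requiredLength_append_of_ppr_eq_nil hxK _ (by rw [← hw']; omega)]

theorem exists_pow_mul_eq_of_reads_eq_one {x : FreeMonoid (A ⊕ A)} (hx : reads x = 1)
    (hx1 : writes x ≠ 1) {Y Z : QueueMonoid A} (h : Commute Y Z) :
    ∃ m n K : ℕ, 0 < m + n ∧
      (queueCon A).mk' x ^ K * (Y ^ m * (queueCon A).mk' x * Z ^ n) =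
        (queueCon A).mk' x ^ K * (Z ^ n * (queueCon A).mk' x * Y ^ m) := by
  obtain ⟨y, rfl⟩ := (queueCon A).mk'_surjective Y
  obtain ⟨z, rfl⟩ := (queueCon A).mk'_surjective Z
  obtain ⟨hr, hw⟩ := commute_reads_writes_of_commute h
  obtain ⟨m, n, hmn, hpow⟩ := FreeMonoid.exists_pow_eq_pow_of_commute hw
  refine ⟨m, n, (reads (y ^ m * x * z ^ n)).length, hmn, ?_⟩
  simpa only [map_mul, map_pow] using queueCon_mk'_pow_mul_eq hx hx1
    (u := y ^ m * x * z ^ n) (v := z ^ n * x * y ^ m)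
    (by simp only [map_mul, map_pow, hx, mul_one]; exact (hr.pow_pow m n).eq)
    (by simp only [map_mul, map_pow, hpow]) le_rfl

theorem exists_mul_pow_eq_of_writes_eq_one {x : FreeMonoid (A ⊕ A)} (hx : writes x = 1)
    (hx1 : reads x ≠ 1) {Y Z : QueueMonoid A} (h : Commute Y Z) :
    ∃ m n K : ℕ, 0 < m + n ∧
      Y ^ m * (queueCon A).mk' x * Z ^ n * (queueCon A).mk' x ^ K =
        Z ^ n * (queueCon A).mk' x * Y ^ m * (queueCon A).mk' x ^ K := by
  obtain ⟨y, rfl⟩ := (queueCon A).mk'_surjective Y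
  obtain ⟨z, rfl⟩ := (queueCon A).mk'_surjective Z
  obtain ⟨hr, hw⟩ := commute_reads_writes_of_commute h
  obtain ⟨m, n, hmn, hpow⟩ := FreeMonoid.exists_pow_eq_pow_of_commute hr
  refine ⟨m, n, (writes (y ^ m * x * z ^ n)).length, hmn, ?_⟩
  simpa only [map_mul, map_pow] using queueCon_mk'_mul_pow_eq hx hx1
    (u := y ^ m * x * z ^ n) (v := z ^ n * x * y ^ m)
    (by simp only [map_mul, map_pow, hpow])
    (by simp only [map_mul, map_pow, hx, mul_one]; exact (hw.pow_pow m n).eq) le_rfl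

end QueueMonoid

section TraceMonoid

variable {Γ : Type} {I : Γ → Γ → Prop}

lemma traceCon_le_ker_lift (S : Γ → Prop) [DecidablePred S]
    (hS : ∀ e f, S e → S f → I e f → e = f) :
    traceCon I ≤ Con.ker (FreeMonoid.lift fun e => if S e then FreeMonoid.of e else 1) := by
  refine Con.conGen_le.2 ?_
  rintro _ _ ⟨e, f, hef, rfl, rfl⟩
  rw [Con.ker_rel, map_mul, map_mul, FreeMonoid.lift_eval_of, FreeMonoid.lift_eval_of]
  by_cases he : S e
  · by_cases hf : S f
    · rw [hS e f he hf hef]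
    · simp [hf]
  · simp [he]

lemma commute_traceCon_mk'_of {b c : Γ} (h : I b c) :
    Commute ((traceCon I).mk' (.of b)) ((traceCon I).mk' (.of c)) := by
  rw [Commute, SemiconjBy, ← map_mul, ← map_mul]
  exact (traceCon I).eq.2 (ConGen.Rel.of _ _ ⟨b, c, h, rfl, rfl⟩)

theorem traceCon_mk'_mul_ne {a b c : Γ} (hab : ¬ I a b) (hba : ¬ I b a) (hne : a ≠ b)
    (hca : c ≠ a) (hcb : c ≠ b) {m : ℕ} (hm : 0 < m) (n : ℕ) (p s : FreeMonoid Γ) :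
    (traceCon I).mk' (p * (.of b ^ m * .of a * .of c ^ n) * s) ≠
      (traceCon I).mk' (p * (.of c ^ n * .of a * .of b ^ m) * s) := by
  classical
  intro h
  have hS : ∀ e f, (e = a ∨ e = b) → (f = a ∨ f = b) → I e f → e = f := by
    rintro e f (rfl | rfl) (rfl | rfl) hef <;> first | rfl | contradiction
  have h' := traceCon_le_ker_lift _ hS ((traceCon I).eq.1 h)
  simp only [Con.ker_rel, map_mul, map_pow, FreeMonoid.lift_eval_of, hne.symm, hca, hcb,
    or_true, true_or, or_self, ↓reduceIte, one_pow, mul_one, one_mul, mul_left_inj,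
    mul_right_inj] at h'
  obtain ⟨k, rfl⟩ := Nat.exists_eq_add_of_lt hm
  exact hne.symm (by simpa [pow_succ'] using congrArg (·.toList.head?) h')

end TraceMonoid

/-- If `η` embeds the trace monoid into the queue monoid, `a ∈ Γ₊ ∪ Γ₋`, and
`(b, c) ∈ I`, then `(a, b) ∈ I` or `(a, c) ∈ I`. -/
theorem stmt16 (Γ A : Type) [DecidableEq A] (I : Γ → Γ → Prop)
    (hirr : ∀ a, ¬ I a a) (hsym : ∀ a b, I a b → I b a)
    (η : TraceMonoid I →* QueueMonoid A) (hη : Function.Injective η)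
    (a : Γ) (ha : GammaPlus I η a ∨ GammaMinus I η a)
    (b c : Γ) (hbc : I b c) :
    I a b ∨ I a c := by
  by_contra! h
  obtain ⟨hab, hac⟩ := h
  have hab' : a ≠ b := by rintro rfl; exact hac hbc
  have hac' : a ≠ c := by rintro rfl; exact hab (hsym _ _ hbc)
  have hbc' : b ≠ c := by rintro rfl; exact hirr b hbc
  have htrace : ∀ {m n : ℕ}, 0 < m + n → ∀ p s : FreeMonoid Γ,
      η ((traceCon I).mk' (p * (.of b ^ m * .of a * .of c ^ n) * s)) ≠
        η ((traceCon I).mk' (p * (.of c ^ n * .of a * .of b ^ m) * s)) := by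
    intro m n hmn p s h
    rcases Nat.eq_zero_or_pos m with rfl | hm
    · exact traceCon_mk'_mul_ne hac (hac ∘ hsym _ _) hac' hab'.symm hbc' (by omega) 0 p s
        (hη h).symm
    · exact traceCon_mk'_mul_ne hab (hab ∘ hsym _ _) hab' hac'.symm hbc'.symm hm n p s (hη h)
  have hyz := (commute_traceCon_mk'_of hbc).map η
  rcases ha with ⟨w, hw, hwrite, hread⟩ | ⟨w, hw, hwrite, hread⟩
  · obtain ⟨m, n, K, hmn, hQ⟩ := exists_pow_mul_eq_of_reads_eq_one (x := .ofList w)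
      (congrArg FreeMonoid.ofList hread) (fun h => hwrite (congrArg FreeMonoid.toList h)) hyz
    refine htrace hmn (.of a ^ K) 1 ?_
    simpa only [map_mul, map_pow, map_one, mul_one, hw] using hQ
  · obtain ⟨m, n, K, hmn, hQ⟩ := exists_mul_pow_eq_of_writes_eq_one (x := .ofList w)
      (congrArg FreeMonoid.ofList hwrite) (fun h => hread (congrArg FreeMonoid.toList h)) hyz
    refine htrace hmn 1 (.of a ^ K) ?_
    simpa only [map_mul, map_pow, map_one, one_mul, hw] using hQ
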